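/- Let n ≤ 3 and let P, Q ⊆ ℝ^n be polyhedral cones. If (u,v) is a local minimizer of MA(P,Q) with u ≠ −v, then u is a ray of P or v is a ray of Q. -/

import Mathlib

/-!
If neither `u` nor `v` is a ray, the faces of `P` and `Q` generated by `u` and `v` span
subspaces `L` and `M` of dimension at least two, and `u`, `v` can be moved in both directions
inside `L`, `M` without leaving the cones. First-order optimality then gives `⟨u, v⟩ ≤ 0` and
`v ⊥ L ∩ u^⊥`, `u ⊥ M ∩ v^⊥`. Since `n ≤ 3`, `L` and `M` share a nonzero vector `w`; with
`-1 < ⟨u, v⟩ ≤ 0` the first-order conditions force `w ⊥ u` and `w ⊥ v`. Moving `u` to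
`u + s w` and `v` to `v - s w` and normalizing turns the objective into
`(⟨u, v⟩ - s²) / (1 + s²) < ⟨u, v⟩`, contradicting local minimality.
-/

open Matrix

/-- Euclidean norm of a vector in `ℝ^n`. -/
noncomputable def vnorm {n : ℕ} (v : Fin n → ℝ) : ℝ := Real.sqrt (v ⬝ᵥ v)

/-- The polyhedral cone generated by the columns of `G`. -/
def coneOf {m p : ℕ} (G : Matrix (Fin m) (Fin p) ℝ) : Set (Fin m → ℝ) :=
  {u | ∃ x : Fin p → ℝ, (∀ i, 0 ≤ x i) ∧ u = G.mulVec x}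

/-- `F` is a face of the cone `P`. -/
def IsFace {d : ℕ} (P F : Set (Fin d → ℝ)) : Prop :=
  F ⊆ P ∧ Convex ℝ F ∧ (∀ c : ℝ, 0 ≤ c → ∀ x ∈ F, c • x ∈ F) ∧
    ∀ v₁ v₂, v₁ ∈ P → v₂ ∈ P → v₁ + v₂ ∈ F → v₁ ∈ F ∧ v₂ ∈ F

/-- The dimension of a face: the dimension of its linear span. -/
noncomputable def faceDim {d : ℕ} (F : Set (Fin d → ℝ)) : ℕ :=
  Module.finrank ℝ ↥(Submodule.span ℝ F)

/-- `x` is a ray of the polyhedral cone `P`: a nonzero vector of a one-dimensional face. -/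
def IsRay {d : ℕ} (P : Set (Fin d → ℝ)) (x : Fin d → ℝ) : Prop :=
  x ≠ 0 ∧ ∃ F, IsFace P F ∧ faceDim F = 1 ∧ x ∈ F

open Filter Topology

lemma coneOf_eq_coe_map {m p : ℕ} (G : Matrix (Fin m) (Fin p) ℝ) :
    coneOf G = (PointedCone.positive ℝ (Fin p → ℝ)).map G.mulVecLin := by
  ext u
  simp [coneOf, Pi.le_def, eq_comm]

namespace PointedCone

variable {𝕜 E : Type*} [Field 𝕜] [LinearOrder 𝕜] [IsStrictOrderedRing 𝕜]
  [AddCommGroup E] [Module 𝕜 E] {C : PointedCone 𝕜 E} {u x y z : E}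

/-- The smallest face of `C` containing `u ∈ C`. -/
def minFace (C : PointedCone 𝕜 E) (u : E) : PointedCone 𝕜 E where
  carrier := {x | x ∈ C ∧ ∃ l : 𝕜, l • u - x ∈ C}
  add_mem' := by
    rintro x y ⟨hx, l, hl⟩ ⟨hy, m, hm⟩
    refine ⟨C.add_mem hx hy, l + m, ?_⟩
    convert C.add_mem hl hm using 1
    module
  zero_mem' := ⟨C.zero_mem, 0, by simp⟩
  smul_mem' := by
    rintro ⟨c, hc⟩ x ⟨hx, l, hl⟩
    rw [Nonneg.mk_smul]
    refine ⟨C.smul_mem hc hx, c * l, ?_⟩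
    convert C.smul_mem hc hl using 1
    module

lemma minFace_le : C.minFace u ≤ C := fun _ hx => hx.1

lemma mem_minFace_self (hu : u ∈ C) : u ∈ C.minFace u :=
  ⟨hu, 1, by simp⟩

lemma mem_minFace_of_add_mem (hx : x ∈ C) (hy : y ∈ C) (hxy : x + y ∈ C.minFace u) :
    x ∈ C.minFace u := by
  obtain ⟨-, l, hl⟩ := hxy
  refine ⟨hx, l, ?_⟩
  convert C.add_mem hl hy using 1
  abel

lemma exists_sub_eq_of_mem_span_minFace
    (hz : z ∈ Submodule.span 𝕜 (C.minFace u : Set E)) :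
    ∃ x ∈ C.minFace u, ∃ y ∈ C.minFace u, x - y = z := by
  induction hz using Submodule.span_induction with
  | mem x hx => exact ⟨x, hx, 0, zero_mem _, sub_zero x⟩
  | zero => exact ⟨0, zero_mem _, 0, zero_mem _, sub_zero 0⟩
  | add _ _ _ _ h₁ h₂ =>
    obtain ⟨x₁, hx₁, y₁, hy₁, rfl⟩ := h₁
    obtain ⟨x₂, hx₂, y₂, hy₂, rfl⟩ := h₂
    exact ⟨x₁ + x₂, add_mem hx₁ hx₂, y₁ + y₂, add_mem hy₁ hy₂, by abel⟩
  | smul c _ _ h =>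
    obtain ⟨x, hx, y, hy, rfl⟩ := h
    rcases le_total 0 c with hc | hc
    · exact ⟨c • x, smul_mem _ hc hx, c • y, smul_mem _ hc hy, (smul_sub c x y).symm⟩
    · refine ⟨(-c) • y, smul_mem _ (neg_nonneg.2 hc) hy, (-c) • x,
        smul_mem _ (neg_nonneg.2 hc) hx, by module⟩

lemma eventually_add_smul_mem [TopologicalSpace 𝕜] [OrderTopology 𝕜] (hu : u ∈ C)
    (hz : z ∈ Submodule.span 𝕜 (C.minFace u : Set E)) :
    ∀ᶠ s in 𝓝 (0 : 𝕜), u + s • z ∈ C := by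
  obtain ⟨x, ⟨hx, l, hl⟩, y, ⟨hy, m, hm⟩, rfl⟩ := exists_sub_eq_of_mem_span_minFace hz
  refine (nhds_basis_abs_sub_lt (0 : 𝕜)).eventually_iff.2
    ⟨(|l| + |m| + 1)⁻¹, by positivity, fun s hs => ?_⟩
  rw [Set.mem_ofPred_eq, sub_zero] at hs
  have hsl : |s| * |l| + |s| * |m| ≤ 1 := by
    have := mul_lt_mul_of_pos_right hs (by positivity : (0 : 𝕜) < |l| + |m| + 1)
    rw [inv_mul_cancel₀ (by positivity)] at this
    nlinarith [abs_nonneg s]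
  -- `u + s • (x - y) = (1 - s * m) • u + s • (m • u - y) + s • x`, and symmetrically for `s < 0`
  rcases le_total 0 s with hs0 | hs0
  · have h : 0 ≤ 1 - s * m := by
      nlinarith [abs_mul s m ▸ le_abs_self (s * m), mul_nonneg (abs_nonneg s) (abs_nonneg l)]
    convert C.add_mem (C.add_mem (C.smul_mem h hu) (C.smul_mem hs0 hm)) (C.smul_mem hs0 hx)
      using 1
    module
  · have h : 0 ≤ 1 + s * l := by
      nlinarith [abs_mul s l ▸ neg_abs_le (s * l), mul_nonneg (abs_nonneg s) (abs_nonneg m)]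
    have hs0' : 0 ≤ -s := neg_nonneg.2 hs0
    convert C.add_mem (C.add_mem (C.smul_mem h hu) (C.smul_mem hs0' hl)) (C.smul_mem hs0' hy)
      using 1
    module

lemma isFace_minFace {d : ℕ} (C : PointedCone ℝ (Fin d → ℝ)) (u : Fin d → ℝ) :
    IsFace C (C.minFace u : Set (Fin d → ℝ)) :=
  ⟨minFace_le, (C.minFace u).convex, fun _ hc _ hx => smul_mem _ hc hx,
    fun v₁ v₂ h₁ h₂ h => ⟨mem_minFace_of_add_mem h₁ h₂ h,
      mem_minFace_of_add_mem h₂ h₁ (add_comm v₁ v₂ ▸ h)⟩⟩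

lemma two_le_finrank_span_minFace {d : ℕ} {C : PointedCone ℝ (Fin d → ℝ)} {u : Fin d → ℝ}
    (hu : u ∈ C) (hu0 : u ≠ 0) (hray : ¬IsRay C u) :
    2 ≤ Module.finrank ℝ (Submodule.span ℝ (C.minFace u : Set (Fin d → ℝ))) := by
  have hpos : 1 ≤ Module.finrank ℝ (Submodule.span ℝ (C.minFace u : Set (Fin d → ℝ))) :=
    Submodule.one_le_finrank_iff.2 <| (Submodule.ne_bot_iff _).2
      ⟨u, Submodule.subset_span (mem_minFace_self hu), hu0⟩
  have hne : faceDim (C.minFace u : Set (Fin d → ℝ)) ≠ 1 := fun h =>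
    hray ⟨hu0, _, isFace_minFace C u, h, mem_minFace_self hu⟩
  exact Nat.lt_of_le_of_ne hpos (Ne.symm hne)

end PointedCone

section Sphere

variable {n : ℕ} {u a : Fin n → ℝ}

lemma dotProduct_self_nonneg (x : Fin n → ℝ) : 0 ≤ x ⬝ᵥ x :=
  Finset.sum_nonneg fun _ _ => mul_self_nonneg _

lemma dotProduct_self_pos {x : Fin n → ℝ} (hx : x ≠ 0) : 0 < x ⬝ᵥ x := by
  simpa using dotProduct_star_self_pos_iff.2 hx

lemma ne_zero_of_dotProduct_self_eq_one {x : Fin n → ℝ} (hx : x ⬝ᵥ x = 1) : x ≠ 0 := by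
  rintro rfl
  simp at hx

lemma vnorm_nonneg (x : Fin n → ℝ) : 0 ≤ vnorm x := Real.sqrt_nonneg _

lemma vnorm_eq_one_iff : vnorm u = 1 ↔ u ⬝ᵥ u = 1 := Real.sqrt_eq_one

lemma vnorm_smul (c : ℝ) (x : Fin n → ℝ) : vnorm (c • x) = |c| * vnorm x := by
  rw [vnorm, vnorm, smul_dotProduct, dotProduct_smul, smul_eq_mul, smul_eq_mul, ← mul_assoc,
    Real.sqrt_mul (mul_self_nonneg c), Real.sqrt_mul_self_eq_abs]

lemma vnorm_inv_smul_self (hu : vnorm u ≠ 0) : vnorm ((vnorm u)⁻¹ • u) = 1 := by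
  rw [vnorm_smul, abs_inv, abs_of_nonneg (vnorm_nonneg u), inv_mul_cancel₀ hu]

lemma add_dotProduct_add_self (hau : a ⬝ᵥ u = 0) :
    (u + a) ⬝ᵥ (u + a) = u ⬝ᵥ u + a ⬝ᵥ a := by
  rw [add_dotProduct, dotProduct_add, dotProduct_add, hau, dotProduct_comm u a, hau]
  ring

lemma vnorm_add_eq_sqrt (huu : u ⬝ᵥ u = 1) (hau : a ⬝ᵥ u = 0) : vnorm (u + a) = √(1 + a ⬝ᵥ a) := by
  rw [vnorm, add_dotProduct_add_self hau, huu]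

lemma one_le_vnorm_add (huu : u ⬝ᵥ u = 1) (hau : a ⬝ᵥ u = 0) : 1 ≤ vnorm (u + a) := by
  rw [vnorm_add_eq_sqrt huu hau, Real.one_le_sqrt]
  linarith [dotProduct_self_nonneg a]

lemma one_lt_vnorm_add (huu : u ⬝ᵥ u = 1) (hau : a ⬝ᵥ u = 0) (ha : a ≠ 0) : 1 < vnorm (u + a) := by
  rw [vnorm_add_eq_sqrt huu hau, Real.lt_sqrt zero_le_one]
  linarith [dotProduct_self_pos ha]

/-- With `r = vnorm (u + a)`, this is `2 - 2 / r ≤ r ^ 2 - 1`, i.e. `(r - 1) ^ 2 (r + 2) ≥ 0`. -/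
lemma vnorm_inv_smul_add_sub_le (huu : u ⬝ᵥ u = 1) (hau : a ⬝ᵥ u = 0) :
    vnorm ((vnorm (u + a))⁻¹ • (u + a) - u) ≤ vnorm a := by
  set r := vnorm (u + a) with hr
  have hr1 : 1 ≤ r := one_le_vnorm_add huu hau
  have hrr : a ⬝ᵥ a = r * r - 1 := by
    rw [hr, vnorm, Real.mul_self_sqrt (dotProduct_self_nonneg _), add_dotProduct_add_self hau,
      huu]
    ring
  have hdist : (r⁻¹ • (u + a) - u) ⬝ᵥ (r⁻¹ • (u + a) - u) = (2 * r - 2) / r := by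
    simp only [sub_dotProduct, dotProduct_sub, smul_dotProduct, dotProduct_smul, smul_eq_mul,
      add_dotProduct, dotProduct_add, huu, hau, dotProduct_comm u a]
    field_simp
    nlinarith
  rw [vnorm, vnorm, hdist, hrr]
  refine Real.sqrt_le_sqrt ((div_le_iff₀ (by linarith)).2 ?_)
  nlinarith [mul_nonneg (sq_nonneg (r - 1)) (by linarith : 0 ≤ r + 2)]

end Sphere

section LocalMin

variable {n : ℕ}

def IsLocalMinMA (P Q : Set (Fin n → ℝ)) (u v : Fin n → ℝ) : Prop :=
  ∃ ε > (0:ℝ), ∀ u' ∈ P, ∀ v' ∈ Q, vnorm u' = 1 → vnorm v' = 1 →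
    vnorm (u' - u) < ε → vnorm (v' - v) < ε → u ⬝ᵥ v ≤ u' ⬝ᵥ v'

variable {P Q : Set (Fin n → ℝ)} {C D : PointedCone ℝ (Fin n → ℝ)} {u v w y z : Fin n → ℝ}

lemma IsLocalMinMA.symm (h : IsLocalMinMA P Q u v) : IsLocalMinMA Q P v u := by
  obtain ⟨ε, hε, h⟩ := h
  refine ⟨ε, hε, fun v' hv' u' hu' hv1 hu1 hvd hud => ?_⟩
  rw [dotProduct_comm v, dotProduct_comm v']
  exact h u' hu' v' hv' hu1 hv1 hud hvd

lemma IsLocalMinMA.exists_mul_vnorm_le (h : IsLocalMinMA C D u v) (huu : u ⬝ᵥ u = 1)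
    (hvv : v ⬝ᵥ v = 1) :
    ∃ ε > 0, ∀ a b, a ⬝ᵥ u = 0 → b ⬝ᵥ v = 0 → vnorm a < ε → vnorm b < ε →
      u + a ∈ C → v + b ∈ D →
      u ⬝ᵥ v * (vnorm (u + a) * vnorm (v + b)) ≤ (u + a) ⬝ᵥ (v + b) := by
  obtain ⟨ε, hε, h⟩ := h
  refine ⟨ε, hε, fun a b hau hbv ha hb haC hbD => ?_⟩
  have hr := one_le_vnorm_add huu hau
  have hr' := one_le_vnorm_add hvv hbv
  have key := h _ (C.smul_mem (by positivity) haC) _ (D.smul_mem (by positivity) hbD)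
    (vnorm_inv_smul_self (by positivity)) (vnorm_inv_smul_self (by positivity))
    ((vnorm_inv_smul_add_sub_le huu hau).trans_lt ha)
    ((vnorm_inv_smul_add_sub_le hvv hbv).trans_lt hb)
  rw [smul_dotProduct, dotProduct_smul, smul_eq_mul, smul_eq_mul, ← mul_assoc,
    ← mul_inv, le_inv_mul_iff₀ (by positivity)] at key
  linarith

lemma IsLocalMinMA.eventually_mul_vnorm_le (h : IsLocalMinMA C D u v) (hu : u ∈ C) (hv : v ∈ D)
    (huu : u ⬝ᵥ u = 1) (hvv : v ⬝ᵥ v = 1)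
    (hz : z ∈ Submodule.span ℝ (C.minFace u : Set (Fin n → ℝ))) (hzu : z ⬝ᵥ u = 0)
    (hy : y ∈ Submodule.span ℝ (D.minFace v : Set (Fin n → ℝ))) (hyv : y ⬝ᵥ v = 0) :
    ∀ᶠ s in 𝓝 (0 : ℝ),
      u ⬝ᵥ v * (vnorm (u + s • z) * vnorm (v + s • y)) ≤ (u + s • z) ⬝ᵥ (v + s • y) := by
  obtain ⟨ε, hε, key⟩ := h.exists_mul_vnorm_le huu hvv
  have hsmall : ∀ x : Fin n → ℝ, ∀ᶠ s in 𝓝 (0 : ℝ), vnorm (s • x) < ε := fun x => by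
    have : Tendsto (fun s : ℝ => |s| * vnorm x) (𝓝 0) (𝓝 0) := by
      simpa using (continuous_abs.tendsto (0 : ℝ)).mul_const (vnorm x)
    simpa only [vnorm_smul] using this.eventually (gt_mem_nhds hε)
  filter_upwards [hsmall z, hsmall y, C.eventually_add_smul_mem hu hz,
    D.eventually_add_smul_mem hv hy] with s hzε hyε hzC hyD
  refine key _ _ ?_ ?_ hzε hyε hzC hyD
  · rw [smul_dotProduct, hzu, smul_zero]
  · rw [smul_dotProduct, hyv, smul_zero]

lemma hasDerivAt_vnorm_add_smul (huu : u ⬝ᵥ u = 1) (hzu : z ⬝ᵥ u = 0) :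
    HasDerivAt (fun s : ℝ => vnorm (u + s • z)) 0 0 := by
  have hfun : (fun s : ℝ => vnorm (u + s • z)) = fun s => √(1 + z ⬝ᵥ z * s ^ 2) := by
    funext s
    rw [vnorm_add_eq_sqrt huu (by rw [smul_dotProduct, hzu, smul_zero]), smul_dotProduct,
      dotProduct_smul, smul_eq_mul, smul_eq_mul]
    ring_nf
  rw [hfun]
  simpa using (((hasDerivAt_pow 2 (0 : ℝ)).const_mul (z ⬝ᵥ z)).const_add 1).sqrt (by simp)

lemma IsLocalMinMA.dotProduct_eq_zero (h : IsLocalMinMA C D u v) (hu : u ∈ C) (hv : v ∈ D)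
    (huu : u ⬝ᵥ u = 1) (hvv : v ⬝ᵥ v = 1)
    (hz : z ∈ Submodule.span ℝ (C.minFace u : Set (Fin n → ℝ))) (hzu : z ⬝ᵥ u = 0) :
    z ⬝ᵥ v = 0 := by
  have hev := h.eventually_mul_vnorm_le hu hv huu hvv hz hzu (Submodule.zero_mem _)
    (zero_dotProduct v)
  have hmin : IsLocalMin (fun s : ℝ => s * (z ⬝ᵥ v) - u ⬝ᵥ v * (vnorm (u + s • z) - 1)) 0 := by
    filter_upwards [hev] with s hs
    rw [smul_zero, add_zero, vnorm_eq_one_iff.2 hvv, mul_one, add_dotProduct, smul_dotProduct,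
      smul_eq_mul] at hs
    simp only [zero_smul, add_zero, vnorm_eq_one_iff.2 huu]
    linarith
  refine hmin.hasDerivAt_eq_zero ?_
  simpa using ((hasDerivAt_id (0 : ℝ)).mul_const (z ⬝ᵥ v)).fun_sub
    (((hasDerivAt_vnorm_add_smul huu hzu).sub_const 1).const_mul (u ⬝ᵥ v))

lemma IsLocalMinMA.dotProduct_nonpos (h : IsLocalMinMA C D u v) (hu : u ∈ C) (hv : v ∈ D)
    (huu : u ⬝ᵥ u = 1) (hvv : v ⬝ᵥ v = 1)
    (hz : z ∈ Submodule.span ℝ (C.minFace u : Set (Fin n → ℝ))) (hzu : z ⬝ᵥ u = 0)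
    (hz0 : z ≠ 0) :
    u ⬝ᵥ v ≤ 0 := by
  have hzv := h.dotProduct_eq_zero hu hv huu hvv hz hzu
  obtain ⟨s, hs, hle⟩ := (h.eventually_mul_vnorm_le hu hv huu hvv hz hzu (Submodule.zero_mem _)
    (zero_dotProduct v)).exists_gt
  rw [smul_zero, add_zero, vnorm_eq_one_iff.2 hvv, mul_one, add_dotProduct, smul_dotProduct,
    hzv, smul_zero, add_zero] at hle
  have hgt : 1 < vnorm (u + s • z) :=
    one_lt_vnorm_add huu (by rw [smul_dotProduct, hzu, smul_zero]) (smul_ne_zero hs.ne' hz0)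
  nlinarith

lemma IsLocalMinMA.dotProduct_le_neg_one (h : IsLocalMinMA C D u v) (hu : u ∈ C) (hv : v ∈ D)
    (huu : u ⬝ᵥ u = 1) (hvv : v ⬝ᵥ v = 1)
    (hwC : w ∈ Submodule.span ℝ (C.minFace u : Set (Fin n → ℝ)))
    (hwD : w ∈ Submodule.span ℝ (D.minFace v : Set (Fin n → ℝ)))
    (hwu : w ⬝ᵥ u = 0) (hwv : w ⬝ᵥ v = 0) (hw0 : w ≠ 0) :
    u ⬝ᵥ v ≤ -1 := by
  obtain ⟨s, hs, hle⟩ := (h.eventually_mul_vnorm_le hu hv huu hvv hwC hwu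
    (Submodule.neg_mem _ hwD) (by rw [neg_dotProduct, hwv, neg_zero])).exists_gt
  rw [smul_neg] at hle
  set a := s • w
  have hau : a ⬝ᵥ u = 0 := by rw [smul_dotProduct, hwu, smul_zero]
  have hav : a ⬝ᵥ v = 0 := by rw [smul_dotProduct, hwv, smul_zero]
  have ha : 0 < a ⬝ᵥ a := dotProduct_self_pos (smul_ne_zero hs.ne' hw0)
  rw [vnorm_add_eq_sqrt huu hau, vnorm_add_eq_sqrt hvv (by rw [neg_dotProduct, hav, neg_zero]),
    neg_dotProduct, dotProduct_neg, neg_neg, Real.mul_self_sqrt (by linarith), add_dotProduct,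
    dotProduct_add, dotProduct_add, dotProduct_neg, dotProduct_neg, hav, dotProduct_comm u a,
    hau] at hle
  nlinarith

end LocalMin

lemma neg_one_lt_dotProduct {n : ℕ} {u v : Fin n → ℝ} (huu : u ⬝ᵥ u = 1) (hvv : v ⬝ᵥ v = 1)
    (hne : u ≠ -v) : -1 < u ⬝ᵥ v := by
  have := dotProduct_self_pos (x := u + v) (by rwa [Ne, add_eq_zero_iff_eq_neg])
  rw [add_dotProduct, dotProduct_add, dotProduct_add, huu, hvv, dotProduct_comm v u] at this
  linarith

lemma exists_ne_zero_mem_dotProduct_eq_zero {n : ℕ} {L : Submodule ℝ (Fin n → ℝ)}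
    (hL : 2 ≤ Module.finrank ℝ L) (u : Fin n → ℝ) : ∃ z ∈ L, z ⬝ᵥ u = 0 ∧ z ≠ 0 := by
  have hker := LinearMap.ker_ne_bot_of_finrank_lt
    (f := (dotProductBilin ℝ ℝ u).comp L.subtype) (by rw [Module.finrank_self]; omega)
  obtain ⟨⟨z, hzL⟩, hz, hz0⟩ := (Submodule.ne_bot_iff _).1 hker
  refine ⟨z, hzL, ?_, by simpa using hz0⟩
  simpa [dotProduct_comm] using hz

lemma Submodule.exists_ne_zero_mem_of_finrank_lt_add {K V : Type*} [DivisionRing K]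
    [AddCommGroup V] [Module K V] [FiniteDimensional K V] {L M : Submodule K V}
    (h : Module.finrank K V < Module.finrank K L + Module.finrank K M) :
    ∃ w ∈ L, w ∈ M ∧ w ≠ 0 := by
  have hdis : ¬Disjoint L M := fun hdis =>
    (Submodule.finrank_add_finrank_le_of_disjoint hdis).not_gt h
  simpa [Submodule.disjoint_def] using hdis

theorem isRay_or_isRay_of_isLocalMinMA {n : ℕ} (hn : n ≤ 3) {C D : PointedCone ℝ (Fin n → ℝ)}
    {u v : Fin n → ℝ} (hu : u ∈ C) (hv : v ∈ D) (huu : u ⬝ᵥ u = 1) (hvv : v ⬝ᵥ v = 1)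
    (h : IsLocalMinMA C D u v) (hne : u ≠ -v) :
    IsRay C u ∨ IsRay D v := by
  by_contra! ⟨hCu, hDv⟩
  set L := Submodule.span ℝ (C.minFace u : Set (Fin n → ℝ))
  set M := Submodule.span ℝ (D.minFace v : Set (Fin n → ℝ))
  have huL : u ∈ L := Submodule.subset_span (PointedCone.mem_minFace_self hu)
  have hvM : v ∈ M := Submodule.subset_span (PointedCone.mem_minFace_self hv)
  have hL : 2 ≤ Module.finrank ℝ L :=
    PointedCone.two_le_finrank_span_minFace hu (ne_zero_of_dotProduct_self_eq_one huu) hCu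
  have hM : 2 ≤ Module.finrank ℝ M :=
    PointedCone.two_le_finrank_span_minFace hv (ne_zero_of_dotProduct_self_eq_one hvv) hDv
  have ht : u ⬝ᵥ v ≤ 0 := by
    obtain ⟨z, hzL, hzu, hz0⟩ := exists_ne_zero_mem_dotProduct_eq_zero hL u
    exact h.dotProduct_nonpos hu hv huu hvv hzL hzu hz0
  have ht' := neg_one_lt_dotProduct huu hvv hne
  obtain ⟨w, hwL, hwM, hw0⟩ := Submodule.exists_ne_zero_mem_of_finrank_lt_add (K := ℝ)
    (L := L) (M := M) (by rw [Module.finrank_fin_fun]; omega)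
  have hα := h.dotProduct_eq_zero hu hv huu hvv (sub_mem hwL (Submodule.smul_mem L (w ⬝ᵥ u) huL))
    (by rw [sub_dotProduct, smul_dotProduct, huu, smul_eq_mul, mul_one, sub_self])
  have hβ := h.symm.dotProduct_eq_zero hv hu hvv huu
    (sub_mem hwM (Submodule.smul_mem M (w ⬝ᵥ v) hvM))
    (by rw [sub_dotProduct, smul_dotProduct, hvv, smul_eq_mul, mul_one, sub_self])
  rw [sub_dotProduct, smul_dotProduct, smul_eq_mul, sub_eq_zero] at hα hβ
  rw [dotProduct_comm v u] at hβ
  -- `w ⬝ᵥ v = (w ⬝ᵥ u) t` and `w ⬝ᵥ u = (w ⬝ᵥ v) t` with `|t| < 1`, where `t = u ⬝ᵥ v`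
  have hwu : w ⬝ᵥ u = 0 := by
    have hprod : w ⬝ᵥ u * (1 - (u ⬝ᵥ v) ^ 2) = 0 := by linear_combination hβ + u ⬝ᵥ v * hα
    exact (mul_eq_zero.1 hprod).resolve_right (by nlinarith)
  have hwv : w ⬝ᵥ v = 0 := by rw [hα, hwu, zero_mul]
  exact ht'.not_ge (h.dotProduct_le_neg_one hu hv huu hvv hwL hwM hwu hwv hw0)

/-- In dimension `n ≤ 3`, any local minimizer `(u,v)` of `MA(P,Q)` with `u ≠ -v` has `u`
a ray of `P` or `v` a ray of `Q`. -/
theorem stmt9 {n : ℕ} (hn : n ≤ 3) (P Q : Set (Fin n → ℝ))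
    (hP : ∃ (p : ℕ) (G : Matrix (Fin n) (Fin p) ℝ), P = coneOf G)
    (hQ : ∃ (q : ℕ) (H : Matrix (Fin n) (Fin q) ℝ), Q = coneOf H)
    (u v : Fin n → ℝ)
    (hu : u ∈ P) (hv : v ∈ Q) (hnu : vnorm u = 1) (hnv : vnorm v = 1)
    (hlocmin : ∃ ε > (0:ℝ), ∀ u' ∈ P, ∀ v' ∈ Q, vnorm u' = 1 → vnorm v' = 1 →
        vnorm (u' - u) < ε → vnorm (v' - v) < ε → u ⬝ᵥ v ≤ u' ⬝ᵥ v')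
    (hne : u ≠ -v) :
    IsRay P u ∨ IsRay Q v := by
  obtain ⟨p, G, rfl⟩ := hP
  obtain ⟨q, H, rfl⟩ := hQ
  simp only [coneOf_eq_coe_map] at hu hv hlocmin ⊢
  exact isRay_or_isRay_of_isLocalMinMA hn hu hv (vnorm_eq_one_iff.1 hnu)
    (vnorm_eq_one_iff.1 hnv) hlocmin hne
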